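/- (Corollary of Theorem 1 justifying the CLiD indicator of Section 3.3.) Let q_mem and q_out be pmfs on α × γ. Suppose the conditional-overfitting inequality Kcond(q_out) - Kcond(q_mem) ≥ Kmarg(q_out) - Kmarg(q_mem) holds and that δ_H := (H_X(q_mem) - Hcond(q_mem)) - (H_X(q_out) - Hcond(q_out)) satisfies δ_H ≥ 0. Then the expected conditional likelihood discrepancy separates the two distributions: ∑_{(x,c)} q_mem(x,c) · (Real.log (p c x) - Real.log (pX x)) ≥ ∑_{(x,c)} q_out(x,c) · (Real.log (p c x) - Real.log (pX x)). -/

import Mathlib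

open Finset

namespace CLiD

variable {α γ : Type*} [Fintype α] [Fintype γ]

/-- Marginal of a pmf on `α × γ` onto `α`. -/
noncomputable def qX (q : α × γ → ℝ) (x : α) : ℝ := ∑ c, q (x, c)

/-- Marginal of a pmf on `α × γ` onto `γ`. -/
noncomputable def qC (q : α × γ → ℝ) (c : γ) : ℝ := ∑ x, q (x, c)

/-- Conditional distribution of `x` given `c`. -/
noncomputable def qCond (q : α × γ → ℝ) (x : α) (c : γ) : ℝ := q (x, c) / qC q c

/-- Averaged conditional KL divergence
`Kcond(q) = ∑_{(x,c) with q(x,c) > 0} q(x,c) * log (q(x|c) / p c x)`. -/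
noncomputable def Kcond (p : γ → α → ℝ) (q : α × γ → ℝ) : ℝ :=
  ∑ z ∈ Finset.univ.filter (fun z : α × γ => 0 < q z),
    q z * Real.log (qCond q z.1 z.2 / p z.2 z.1)

/-- Marginal KL divergence
`Kmarg(q) = ∑_{x with q_X(x) > 0} q_X(x) * log (q_X(x) / pX x)`. -/
noncomputable def Kmarg (pX : α → ℝ) (q : α × γ → ℝ) : ℝ :=
  ∑ x ∈ Finset.univ.filter (fun x : α => 0 < qX q x),
    qX q x * Real.log (qX q x / pX x)

/-- Marginal entropy `H_X(q) = -∑_{x with q_X(x) > 0} q_X(x) * log (q_X(x))`. -/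
noncomputable def HX (q : α × γ → ℝ) : ℝ :=
  -∑ x ∈ Finset.univ.filter (fun x : α => 0 < qX q x), qX q x * Real.log (qX q x)

/-- Averaged conditional entropy
`Hcond(q) = -∑_{(x,c) with q(x,c) > 0} q(x,c) * log (q(x|c))`. -/
noncomputable def Hcond (q : α × γ → ℝ) : ℝ :=
  -∑ z ∈ Finset.univ.filter (fun z : α × γ => 0 < q z),
    q z * Real.log (qCond q z.1 z.2)

/-!
Splitting the logarithms inside the KL divergences shows that, for every nonnegative `q`, the
expected log-likelihood ratio `E_q[log p(x|c) - log pX(x)]` equals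
`(Kmarg - Kcond) + (H_X - Hcond)`. Hence the gap between its values at `q_mem` and `q_out` is the
conditional-overfitting margin `(Kcond q_out - Kcond q_mem) - (Kmarg q_out - Kmarg q_mem)` plus
`δ_H`, a sum of two nonnegative terms.
-/

noncomputable def clid (p : γ → α → ℝ) (pX : α → ℝ) (q : α × γ → ℝ) : ℝ :=
  ∑ z : α × γ, q z * (Real.log (p z.2 z.1) - Real.log (pX z.1))

section Nonneg

variable {q : α × γ → ℝ} (hq : ∀ z, 0 ≤ q z)
include hq

lemma Kcond_eq_neg_Hcond_sub {p : γ → α → ℝ} (hp : ∀ c x, p c x ≠ 0) :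
    Kcond p q = -Hcond q - ∑ z, q z * Real.log (p z.2 z.1) := by
  have hfilter : ∑ z ∈ univ.filter (fun z => 0 < q z), q z * Real.log (p z.2 z.1)
      = ∑ z, q z * Real.log (p z.2 z.1) :=
    sum_filter_of_ne fun z _ hz => (hq z).lt_of_ne' (left_ne_zero_of_mul hz)
  rw [Kcond, Hcond, neg_neg, ← hfilter, ← sum_sub_distrib]
  refine sum_congr rfl fun z hz => ?_
  have hz : 0 < q z := (mem_filter.mp hz).2
  have hqCond : 0 < qCond q z.1 z.2 :=
    div_pos hz (hz.trans_le (single_le_sum (fun x _ => hq (x, z.2)) (mem_univ z.1)))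
  rw [Real.log_div hqCond.ne' (hp _ _)]
  ring

lemma Kmarg_eq_neg_HX_sub {pX : α → ℝ} (hpX : ∀ x, pX x ≠ 0) :
    Kmarg pX q = -HX q - ∑ x, qX q x * Real.log (pX x) := by
  have hfilter : ∑ x ∈ univ.filter (fun x => 0 < qX q x), qX q x * Real.log (pX x)
      = ∑ x, qX q x * Real.log (pX x) :=
    sum_filter_of_ne fun x _ hx =>
      (sum_nonneg fun c _ => hq (x, c)).lt_of_ne' (left_ne_zero_of_mul hx)
  rw [Kmarg, HX, neg_neg, ← hfilter, ← sum_sub_distrib]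
  refine sum_congr rfl fun x hx => ?_
  rw [Real.log_div (mem_filter.mp hx).2.ne' (hpX x)]
  ring

end Nonneg

lemma sum_mul_comp_fst_eq_sum_qX_mul (q : α × γ → ℝ) (f : α → ℝ) :
    ∑ z : α × γ, q z * f z.1 = ∑ x, qX q x * f x := by
  simp only [Fintype.sum_prod_type, qX, sum_mul]

lemma clid_eq {p : γ → α → ℝ} (hp : ∀ c x, p c x ≠ 0) {pX : α → ℝ} (hpX : ∀ x, pX x ≠ 0)
    {q : α × γ → ℝ} (hq : ∀ z, 0 ≤ q z) :
    clid p pX q = (Kmarg pX q - Kcond p q) + (HX q - Hcond q) := by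
  rw [Kcond_eq_neg_Hcond_sub hq hp, Kmarg_eq_neg_HX_sub hq hpX, clid,
    ← sum_mul_comp_fst_eq_sum_qX_mul]
  simp only [mul_sub, sum_sub_distrib]
  ring

theorem clid_separates_of_conditional_overfitting_general
    (p : γ → α → ℝ) (hp_pos : ∀ c x, 0 < p c x)
    (pX : α → ℝ) (hpX_pos : ∀ x, 0 < pX x)
    (qmem : α × γ → ℝ) (hqmem_nonneg : ∀ z, 0 ≤ qmem z)
    (qout : α × γ → ℝ) (hqout_nonneg : ∀ z, 0 ≤ qout z)
    (h_overfit : Kcond p qout - Kcond p qmem ≥ Kmarg pX qout - Kmarg pX qmem)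
    (h_deltaH : (HX qmem - Hcond qmem) - (HX qout - Hcond qout) ≥ 0) :
    ∑ z : α × γ, qmem z * (Real.log (p z.2 z.1) - Real.log (pX z.1)) ≥
      ∑ z : α × γ, qout z * (Real.log (p z.2 z.1) - Real.log (pX z.1)) := by
  have hp : ∀ c x, p c x ≠ 0 := fun c x => (hp_pos c x).ne'
  have hpX : ∀ x, pX x ≠ 0 := fun x => (hpX_pos x).ne'
  change clid p pX qout ≤ clid p pX qmem
  rw [clid_eq hp hpX hqmem_nonneg, clid_eq hp hpX hqout_nonneg]
  linarith

/-- Corollary of Theorem 1 justifying the CLiD indicator: if the conditional-overfitting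
inequality holds and the entropy correction `δ_H` is nonnegative, then the expected
conditional likelihood discrepancy separates the member and hold-out distributions. -/
theorem clid_separates_of_conditional_overfitting
    [Nonempty α] [Nonempty γ]
    (p : γ → α → ℝ) (hp_nonneg : ∀ c x, 0 ≤ p c x) (hp_pos : ∀ c x, 0 < p c x)
    (hp_sum : ∀ c, ∑ x, p c x = 1)
    (pX : α → ℝ) (hpX_nonneg : ∀ x, 0 ≤ pX x) (hpX_pos : ∀ x, 0 < pX x)
    (hpX_sum : ∑ x, pX x = 1)
    (qmem : α × γ → ℝ) (hqmem_nonneg : ∀ z, 0 ≤ qmem z) (hqmem_sum : ∑ z, qmem z = 1)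
    (qout : α × γ → ℝ) (hqout_nonneg : ∀ z, 0 ≤ qout z) (hqout_sum : ∑ z, qout z = 1)
    (h_overfit : Kcond p qout - Kcond p qmem ≥ Kmarg pX qout - Kmarg pX qmem)
    (h_deltaH : (HX qmem - Hcond qmem) - (HX qout - Hcond qout) ≥ 0) :
    ∑ z : α × γ, qmem z * (Real.log (p z.2 z.1) - Real.log (pX z.1)) ≥
      ∑ z : α × γ, qout z * (Real.log (p z.2 z.1) - Real.log (pX z.1)) :=
  clid_separates_of_conditional_overfitting_general p hp_pos pX hpX_pos qmem hqmem_nonneg qout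
    hqout_nonneg h_overfit h_deltaH

end CLiD
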